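/- arXiv:2408.15226 — 5 statements merged into one kernel-verified Lean document; each statement's English description precedes it below -/
import Mathlib

section
/- Let d ≥ 1, let ρ, ω be states on ℂ^d and let M ≥ 1 be real with ρ ≤ Mω. Then D(ρ‖ω) ≤ log M. (The hypothesis forces ker ω ⊆ ker ρ, so D(ρ‖ω) is well defined; this says the relative entropy is bounded by the max-relative entropy.) -/
noncomputable section

namespace QIT

open Matrix
open scoped ComplexOrder

variable {n : Type*} [Fintype n] [DecidableEq n]

/-- Trace norm of a matrix: sum of absolute values of eigenvalues (0 if not Hermitian). -/
def traceNorm (X : Matrix n n ℂ) : ℝ :=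
  if h : X.IsHermitian then ∑ i, |h.eigenvalues i| else 0

/-- Trace of the positive part: sum of positive eigenvalues (0 if not Hermitian). -/
def trPos (X : Matrix n n ℂ) : ℝ :=
  if h : X.IsHermitian then ∑ i, max (h.eigenvalues i) 0 else 0

/-- Matrix logarithm via functional calculus (with log 0 = 0); 0 if not Hermitian. -/
def mlog (X : Matrix n n ℂ) : Matrix n n ℂ :=
  if h : X.IsHermitian then
    (h.eigenvectorUnitary : Matrix n n ℂ) *
      Matrix.diagonal (fun i => (Real.log (h.eigenvalues i) : ℂ)) *
      (star (h.eigenvectorUnitary : Matrix n n ℂ))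
  else 0

/-- Umegaki relative entropy D(ρ‖ω) = Tr ρ (log ρ - log ω). -/
def relEnt (ρ ω : Matrix n n ℂ) : ℝ :=
  ((ρ * (mlog ρ - mlog ω)).trace).re

/-- Von Neumann entropy. -/
def vN (ρ : Matrix n n ℂ) : ℝ :=
  if h : ρ.IsHermitian then -∑ i, (h.eigenvalues i) * Real.log (h.eigenvalues i) else 0

/-- A quantum state: positive semidefinite with unit trace. -/
def IsState (ρ : Matrix n n ℂ) : Prop := ρ.PosSemidef ∧ ρ.trace = 1

/-- Binary entropy. -/
def binH (ε : ℝ) : ℝ := -(ε * Real.log ε) - (1 - ε) * Real.log (1 - ε)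

/-- g(x) = (1+x)log(1+x) - x log x. -/
def gfun (x : ℝ) : ℝ := (1 + x) * Real.log (1 + x) - x * Real.log x

end QIT

/-!
For `ε > 0` we have `ρ + ε ≤ M (ω + ε)` between strictly positive matrices, so operator
monotonicity of the logarithm gives `log (ρ + ε) ≤ log M + log (ω + ε)`; pairing with `ρ` yields
`Tr ρ log (ρ + ε) ≤ log M + Tr ρ log (ω + ε)`. The left side dominates `Tr ρ log ρ`, and as
`ε → 0` the right side tends to `log M + Tr ρ log ω`, since `ρ ≤ M ω` leaves `ρ` no weight on the
kernel of `ω`, where `log (μ + ε)` diverges.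
-/

open scoped ComplexOrder

lemma CFC.log_add_algebraMap_le_of_le_smul {A : Type*} [CStarAlgebra A] [PartialOrder A]
    [StarOrderedRing A] {a b : A} {M ε : ℝ} (ha : 0 ≤ a) (hb : 0 ≤ b) (hab : a ≤ M • b)
    (hM : 1 ≤ M) (hε : 0 < ε) :
    CFC.log (a + algebraMap ℝ A ε) ≤
      algebraMap ℝ A (Real.log M) + CFC.log (b + algebraMap ℝ A ε) := by
  have hε' : IsStrictlyPositive (algebraMap ℝ A ε) := isStrictlyPositive_algebraMap hε
  have hle : a + algebraMap ℝ A ε ≤ M • (b + algebraMap ℝ A ε) := by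
    have hεM : M • algebraMap ℝ A ε = algebraMap ℝ A (M * ε) := by
      rw [Algebra.algebraMap_eq_smul_one, Algebra.algebraMap_eq_smul_one, smul_smul]
    rw [smul_add, hεM]
    gcongr
    exact algebraMap_le_algebraMap.mpr (le_mul_of_one_le_left hε.le hM)
  calc CFC.log (a + algebraMap ℝ A ε) ≤ CFC.log (M • (b + algebraMap ℝ A ε)) :=
        CFC.log_le_log hle (hε'.nonneg_add ha)
    _ = _ := CFC.log_smul' _ (by linarith) (hε'.nonneg_add hb)

lemma CFC.log_add_algebraMap {A : Type*} [CStarAlgebra A] [PartialOrder A]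
    [StarOrderedRing A] {a : A} {ε : ℝ} (ha : 0 ≤ a) (hε : 0 < ε) :
    CFC.log (a + algebraMap ℝ A ε) = cfc (fun x => Real.log (x + ε)) a := by
  have hlog : ContinuousOn Real.log ((· + ε) '' spectrum ℝ a) := by
    refine Real.continuousOn_log.mono ?_
    rintro _ ⟨x, hx, rfl⟩
    have := spectrum_nonneg_of_nonneg ha hx
    simp only [Set.mem_compl_iff, Set.mem_singleton_iff]
    positivity
  rw [cfc_comp' Real.log (· + ε) a hlog, cfc_add_const ε (fun x => x) a, cfc_id' ℝ a]
  rfl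

lemma Real.mul_log_le_mul_log_add {x ε : ℝ} (hx : 0 ≤ x) (hε : 0 < ε) :
    x * Real.log x ≤ x * Real.log (x + ε) := by
  rcases hx.eq_or_lt with rfl | hx
  · simp
  · exact mul_le_mul_of_nonneg_left (Real.log_le_log hx (by linarith)) hx.le

open Filter Topology in
lemma tendsto_sum_log_add_mul {ι : Type*} [Fintype ι] {μ w : ι → ℝ}
    (hw : ∀ j, μ j = 0 → w j = 0) :
    Tendsto (fun ε => ∑ j, Real.log (μ j + ε) * w j) (𝓝 0) (𝓝 (∑ j, Real.log (μ j) * w j)) := by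
  refine tendsto_finsetSum _ fun j _ => ?_
  by_cases hμ : μ j = 0
  · simp [hw j hμ]
  · have : ContinuousAt (fun ε => Real.log (μ j + ε)) 0 :=
      (Real.continuousAt_log (by simpa)).comp (continuous_const_add (μ j)).continuousAt
    simpa using this.tendsto.mul_const (w j)

namespace Matrix
variable {𝕜 n : Type*} [RCLike 𝕜] [Fintype n]

lemma IsHermitian.trace_mul_cfc [DecidableEq n] {A : Matrix n n 𝕜} (hA : A.IsHermitian)
    (B : Matrix n n 𝕜) (f : ℝ → ℝ) :
    (B * cfc f A).trace = ∑ j, (f (hA.eigenvalues j) : 𝕜) *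
      (star (hA.eigenvectorBasis j).ofLp ⬝ᵥ B *ᵥ (hA.eigenvectorBasis j).ofLp) := by
  rw [hA.cfc_eq, IsHermitian.cfc, Unitary.conjStarAlgAut_apply, ← mul_assoc, trace_mul_cycle,
    ← mul_assoc]
  simp only [trace, diag, mul_diagonal, Function.comp_apply]
  refine Finset.sum_congr rfl fun j _ => ?_
  rw [mul_comm]
  congr 1
  simp only [mul_apply, star_apply, eigenvectorUnitary_apply, RCLike.star_def, Finset.sum_mul,
    dotProduct, Pi.star_apply, mulVec, Finset.mul_sum]
  rw [Finset.sum_comm]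
  simp only [mul_assoc]

lemma IsHermitian.dotProduct_mulVec_eigenvectorBasis [DecidableEq n] {A : Matrix n n 𝕜}
    (hA : A.IsHermitian) (j : n) :
    star (hA.eigenvectorBasis j).ofLp ⬝ᵥ A *ᵥ (hA.eigenvectorBasis j).ofLp = hA.eigenvalues j := by
  rw [hA.mulVec_eigenvectorBasis, dotProduct_smul, dotProduct_comm,
    ← EuclideanSpace.inner_eq_star_dotProduct, inner_self_eq_norm_sq_to_K,
    hA.eigenvectorBasis.orthonormal.1 j]
  simp [RCLike.real_smul_eq_coe_mul]

lemma PosSemidef.trace_mul_nonneg {A B : Matrix n n 𝕜} (hA : A.PosSemidef) (hB : B.PosSemidef) :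
    0 ≤ (A * B).trace := by
  classical
  open scoped MatrixOrder in
  obtain ⟨C, rfl⟩ := CStarAlgebra.nonneg_iff_eq_star_mul_self.mp hB.nonneg
  rw [← mul_assoc, trace_mul_comm, ← mul_assoc, star_eq_conjTranspose]
  exact (hA.mul_mul_conjTranspose_same C).trace_nonneg

lemma PosSemidef.dotProduct_mulVec_eq_zero_of_le_smul {A B : Matrix n n 𝕜} {c : 𝕜}
    (hA : A.PosSemidef) (hAB : (c • B - A).PosSemidef) {v : n → 𝕜} (hv : B *ᵥ v = 0) :
    star v ⬝ᵥ A *ᵥ v = 0 := by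
  have h := hAB.dotProduct_mulVec_nonneg v
  rw [sub_mulVec, smul_mulVec, hv, smul_zero, zero_sub, dotProduct_neg, neg_nonneg] at h
  exact le_antisymm h (hA.dotProduct_mulVec_nonneg v)

end Matrix

namespace QIT

open Matrix
open scoped MatrixOrder Matrix.Norms.L2Operator

variable {n : Type*} [Fintype n] [DecidableEq n]

lemma mlog_eq_log {X : Matrix n n ℂ} (hX : X.IsHermitian) : mlog X = CFC.log X := by
  rw [mlog, dif_pos hX, CFC.log, hX.cfc_eq, IsHermitian.cfc, Unitary.conjStarAlgAut_apply]
  rfl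

lemma re_trace_mul_cfc {A : Matrix n n ℂ} (hA : A.IsHermitian) (B : Matrix n n ℂ) (f : ℝ → ℝ) :
    ((B * cfc f A).trace).re = ∑ j, f (hA.eigenvalues j) *
      (star (hA.eigenvectorBasis j).ofLp ⬝ᵥ B *ᵥ (hA.eigenvectorBasis j).ofLp).re := by
  simp only [hA.trace_mul_cfc, Complex.coe_algebraMap, Complex.re_sum, Complex.re_ofReal_mul]

lemma re_trace_mul_cfc_self {A : Matrix n n ℂ} (hA : A.IsHermitian) (f : ℝ → ℝ) :
    ((A * cfc f A).trace).re = ∑ i, hA.eigenvalues i * f (hA.eigenvalues i) := by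
  simp only [re_trace_mul_cfc hA, hA.dotProduct_mulVec_eigenvectorBasis, Complex.coe_algebraMap,
    Complex.ofReal_re, mul_comm (f _)]

lemma relEnt_eq_sum {ρ ω : Matrix n n ℂ} (hρ : ρ.IsHermitian) (hω : ω.IsHermitian) :
    relEnt ρ ω = ∑ i, hρ.eigenvalues i * Real.log (hρ.eigenvalues i) -
      ∑ j, Real.log (hω.eigenvalues j) *
        (star (hω.eigenvectorBasis j).ofLp ⬝ᵥ ρ *ᵥ (hω.eigenvectorBasis j).ofLp).re := by
  rw [relEnt, mlog_eq_log hρ, mlog_eq_log hω, mul_sub, trace_sub, Complex.sub_re, CFC.log,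
    CFC.log, re_trace_mul_cfc_self, re_trace_mul_cfc]

lemma re_trace_mul_log_add_le {ρ ω : Matrix n n ℂ} (hρ : IsState ρ) (hω : ω.PosSemidef) {M ε : ℝ}
    (hM : 1 ≤ M) (hop : ((M : ℂ) • ω - ρ).PosSemidef) (hε : 0 < ε) :
    ((ρ * CFC.log (ρ + algebraMap ℝ _ ε)).trace).re ≤
      Real.log M + ((ρ * CFC.log (ω + algebraMap ℝ _ ε)).trace).re := by
  have hle := CFC.log_add_algebraMap_le_of_le_smul hρ.1.nonneg hω.nonneg
    (by rwa [le_iff, ← Complex.coe_smul]) hM hε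
  have h := hρ.1.trace_mul_nonneg hle
  rw [mul_sub, mul_add, trace_sub, trace_add, Algebra.algebraMap_eq_smul_one, mul_smul_comm,
    mul_one, trace_smul, hρ.2] at h
  have h := (Complex.nonneg_iff.mp h).1
  simp only [Complex.sub_re, Complex.add_re, Complex.real_smul, mul_one, Complex.ofReal_re] at h
  linarith

lemma sum_mul_log_le_log_add_sum {ρ ω : Matrix n n ℂ} (hρ : IsState ρ) (hω : ω.PosSemidef)
    {M ε : ℝ} (hM : 1 ≤ M) (hop : ((M : ℂ) • ω - ρ).PosSemidef) (hε : 0 < ε) :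
    ∑ i, hρ.1.1.eigenvalues i * Real.log (hρ.1.1.eigenvalues i) ≤
      Real.log M + ∑ j, Real.log (hω.1.eigenvalues j + ε) *
        (star (hω.1.eigenvectorBasis j).ofLp ⬝ᵥ ρ *ᵥ (hω.1.eigenvectorBasis j).ofLp).re := by
  have h := re_trace_mul_log_add_le hρ hω hM hop hε
  rw [CFC.log_add_algebraMap hρ.1.nonneg hε, CFC.log_add_algebraMap hω.nonneg hε,
    re_trace_mul_cfc_self hρ.1.1, re_trace_mul_cfc hω.1] at h
  refine le_trans (Finset.sum_le_sum fun i _ => ?_) h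
  exact Real.mul_log_le_mul_log_add (hρ.1.eigenvalues_nonneg i) hε

theorem relEnt_le_log_of_le_smul_general
    {d : ℕ} (ρ ω : Matrix (Fin d) (Fin d) ℂ)
    (hρ : IsState ρ) (hω : IsState ω)
    (M : ℝ) (hM : 1 ≤ M)
    (hop : ((M : ℂ) • ω - ρ).PosSemidef) :
    relEnt ρ ω ≤ Real.log M := by
  have hωH := hω.1.1
  set w := fun j => (star (hωH.eigenvectorBasis j).ofLp ⬝ᵥ ρ *ᵥ (hωH.eigenvectorBasis j).ofLp).re
  have hw : ∀ j, hωH.eigenvalues j = 0 → w j = 0 := fun j hj => by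
    have hv := hωH.mulVec_eigenvectorBasis j
    rw [hj, zero_smul] at hv
    simp [w, hρ.1.dotProduct_mulVec_eq_zero_of_le_smul hop hv]
  have hlim := ((tendsto_sum_log_add_mul hw).const_add (Real.log M)).mono_left
    (nhdsWithin_le_nhds (s := Set.Ioi 0))
  rw [relEnt_eq_sum hρ.1.1 hωH]
  linarith [ge_of_tendsto hlim (eventually_nhdsWithin_of_forall fun ε hε =>
    sum_mul_log_le_log_add_sum hρ hω.1 hM hop hε)]

/-- relative entropy is bounded by the max-relative entropy. -/
theorem relEnt_le_log_of_le_smul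
    {d : ℕ} (hd : 1 ≤ d) (ρ ω : Matrix (Fin d) (Fin d) ℂ)
    (hρ : IsState ρ) (hω : IsState ω)
    (M : ℝ) (hM : 1 ≤ M)
    (hop : ((M : ℂ) • ω - ρ).PosSemidef) :
    relEnt ρ ω ≤ Real.log M :=
  relEnt_le_log_of_le_smul_general ρ ω hρ hω M hM hop

end QIT
end
end

section
/- Let M > 1 be real and let ε be real with 0 ≤ ε ≤ 1 − 1/M. Consider the diagonal 2×2 states ρ := diag(1, 0), σ := diag(1−ε, ε), and ω := diag(1/M, 1 − 1/M). Then: (i) ½‖ρ − σ‖₁ = ε; (ii) ρ ≤ Mω, and for every real m with m < M it is not the case that ρ ≤ mω (so the max-relative entropy of ρ with respect to ω equals log M); (iii) D(ρ‖ω) − D(σ‖ω) = ε·log(M − 1) + h(ε). In particular this triple of states saturates the semi-continuity bound D(ρ‖ω) − D(σ‖ω) ≤ ε·log(M − 1) + h(ε). -/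
/-!
All three states are diagonal in the same basis, so everything reduces to their diagonal
entries. The continuous functional calculus acts entrywise on a real diagonal matrix, since on
its finite spectrum any function agrees with its Lagrange interpolating polynomial; this gives
the trace norm, the matrix logarithm and hence the relative entropy of diagonal matrices, and the
claimed identities become elementary facts about logarithms.
-/

noncomputable section

namespace Matrix

open Polynomial
open scoped ComplexOrder

variable {n : Type*} [DecidableEq n]

theorem isHermitian_diagonal_ofReal (d : n → ℝ) : (diagonal fun i => (d i : ℂ)).IsHermitian :=
  isHermitian_diagonal_iff.mpr fun i => Complex.conj_ofReal (d i)

theorem posSemidef_diagonal_ofReal_iff (d : n → ℝ) :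
    (diagonal fun i => (d i : ℂ)).PosSemidef ↔ ∀ i, 0 ≤ d i := by
  simp [posSemidef_diagonal_iff, Complex.zero_le_real]

theorem diagonal_vecCons_ofReal (a b : ℝ) :
    diagonal ![(a : ℂ), (b : ℂ)] = diagonal fun i => ((![a, b] i : ℝ) : ℂ) := by
  congr 1; ext i; fin_cases i <;> rfl

variable [Fintype n]

theorem spectrum_real_diagonal_ofReal_subset (d : n → ℝ) :
    spectrum ℝ (diagonal fun i => (d i : ℂ)) ⊆ Set.range d := by
  intro x hx
  have hx' := spectrum.algebraMap_mem ℂ hx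
  rw [spectrum_diagonal] at hx'
  obtain ⟨i, hi⟩ := hx'
  exact ⟨i, Complex.ofReal_injective hi⟩

theorem aeval_diagonal_ofReal (q : ℝ[X]) (d : n → ℝ) :
    aeval (diagonal fun i => (d i : ℂ)) q = diagonal fun i => ((q.eval (d i) : ℝ) : ℂ) := by
  rw [← diagonalAlgHom_apply (R := ℝ), aeval_algHom_apply, aeval_pi_apply, diagonalAlgHom_apply]
  simp only [← Complex.coe_algebraMap, aeval_algebraMap_apply_eq_algebraMap_eval]

theorem cfc_diagonal_ofReal (f : ℝ → ℝ) (d : n → ℝ) :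
    cfc f (diagonal fun i => (d i : ℂ)) = diagonal fun i => (f (d i) : ℂ) := by
  set q := Lagrange.interpolate (Finset.univ.image d) id f
  have hq : ∀ i, q.eval (d i) = f (d i) := fun i =>
    Lagrange.eval_interpolate_at_node f Function.injective_id.injOn (by simp)
  calc cfc f (diagonal fun i => (d i : ℂ))
      = cfc (fun x => q.eval x) (diagonal fun i => (d i : ℂ)) := by
        refine cfc_congr fun x hx => ?_
        obtain ⟨i, rfl⟩ := spectrum_real_diagonal_ofReal_subset d hx
        exact (hq i).symm
    _ = diagonal fun i => (f (d i) : ℂ) := by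
        rw [cfc_polynomial q _ (isHermitian_diagonal_ofReal d).isSelfAdjoint,
          aeval_diagonal_ofReal]
        simp only [hq]

theorem IsHermitian.sum_eigenvalues_eq_re_trace_cfc {A : Matrix n n ℂ} (hA : A.IsHermitian)
    (f : ℝ → ℝ) : ∑ i, f (hA.eigenvalues i) = (cfc f A).trace.re := by
  have hU : star (hA.eigenvectorUnitary : Matrix n n ℂ) * hA.eigenvectorUnitary = 1 :=
    Unitary.star_mul_self_of_mem hA.eigenvectorUnitary.2
  rw [hA.cfc_eq, IsHermitian.cfc, Unitary.conjStarAlgAut_apply, trace_mul_cycle, hU, one_mul,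
    trace_diagonal]
  simp

end Matrix

namespace QIT

open Matrix
open scoped ComplexOrder

variable {n : Type*} [Fintype n] [DecidableEq n]

theorem mlog_eq_cfc {X : Matrix n n ℂ} (hX : X.IsHermitian) : mlog X = cfc Real.log X := by
  rw [mlog, dif_pos hX, hX.cfc_eq, IsHermitian.cfc, Unitary.conjStarAlgAut_apply]
  rfl

theorem mlog_diagonal_ofReal (d : n → ℝ) :
    mlog (diagonal fun i => (d i : ℂ)) = diagonal fun i => (Real.log (d i) : ℂ) := by
  rw [mlog_eq_cfc (isHermitian_diagonal_ofReal d), cfc_diagonal_ofReal]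

theorem traceNorm_eq_re_trace_cfc_abs {X : Matrix n n ℂ} (hX : X.IsHermitian) :
    traceNorm X = (cfc (fun x : ℝ => |x|) X).trace.re := by
  rw [traceNorm, dif_pos hX, hX.sum_eigenvalues_eq_re_trace_cfc]

theorem traceNorm_diagonal_ofReal (d : n → ℝ) :
    traceNorm (diagonal fun i => (d i : ℂ)) = ∑ i, |d i| := by
  rw [traceNorm_eq_re_trace_cfc_abs (isHermitian_diagonal_ofReal d), cfc_diagonal_ofReal,
    trace_diagonal]
  simp

theorem relEnt_diagonal_ofReal (p q : n → ℝ) :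
    relEnt (diagonal fun i => (p i : ℂ)) (diagonal fun i => (q i : ℂ)) =
      ∑ i, p i * (Real.log (p i) - Real.log (q i)) := by
  rw [relEnt, mlog_diagonal_ofReal, mlog_diagonal_ofReal, diagonal_sub, diagonal_mul_diagonal,
    trace_diagonal]
  simp

theorem posSemidef_smul_diagonal_sub_iff {M : ℝ} (hM : 1 < M) (c : ℝ) :
    ((c : ℂ) • diagonal ![((1 / M : ℝ) : ℂ), ((1 - 1 / M : ℝ) : ℂ)] -
      diagonal ![(1 : ℂ), 0]).PosSemidef ↔ M ≤ c := by
  have hM0 : 0 < M := by linarith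
  have h : (c : ℂ) • diagonal ![((1 / M : ℝ) : ℂ), ((1 - 1 / M : ℝ) : ℂ)] -
      diagonal ![(1 : ℂ), 0] = diagonal ![((c / M - 1 : ℝ) : ℂ), ((c * (1 - 1 / M) : ℝ) : ℂ)] := by
    rw [← diagonal_smul, diagonal_sub]
    congr 1; ext i; fin_cases i <;> simp [div_eq_mul_inv]
  rw [h, diagonal_vecCons_ofReal, posSemidef_diagonal_ofReal_iff, Fin.forall_fin_two]
  simp only [cons_val_zero, cons_val_one, sub_nonneg, one_le_div hM0]
  exact ⟨And.left, fun hc =>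
    ⟨hc, mul_nonneg (by linarith) (sub_nonneg.mpr ((div_le_one hM0).mpr hM.le))⟩⟩

theorem semicontinuity_tight_general
    (M ε : ℝ) (hM : 1 < M) (hε0 : 0 ≤ ε)
    (ρ σ ω : Matrix (Fin 2) (Fin 2) ℂ)
    (hρ : ρ = Matrix.diagonal ![(1 : ℂ), 0])
    (hσ : σ = Matrix.diagonal ![((1 - ε : ℝ) : ℂ), ((ε : ℝ) : ℂ)])
    (hω : ω = Matrix.diagonal ![((1 / M : ℝ) : ℂ), ((1 - 1 / M : ℝ) : ℂ)]) :
    traceNorm (ρ - σ) / 2 = ε ∧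
    ((M : ℂ) • ω - ρ).PosSemidef ∧
    (∀ m : ℝ, m < M → ¬ ((m : ℂ) • ω - ρ).PosSemidef) ∧
    relEnt ρ ω - relEnt σ ω = ε * Real.log (M - 1) + binH ε := by
  subst hρ hσ hω
  have hlog : Real.log (1 - M⁻¹) = Real.log (M - 1) - Real.log M := by
    rw [← Real.log_div (by linarith) (by linarith)]
    congr 1; field_simp
  refine ⟨?_, (posSemidef_smul_diagonal_sub_iff hM M).mpr le_rfl,
    fun m hm h => hm.not_ge ((posSemidef_smul_diagonal_sub_iff hM m).mp h), ?_⟩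
  · have hρσ : diagonal ![(1 : ℂ), 0] - diagonal ![((1 - ε : ℝ) : ℂ), ((ε : ℝ) : ℂ)] =
        diagonal ![((ε : ℝ) : ℂ), ((-ε : ℝ) : ℂ)] := by
      rw [diagonal_sub]
      congr 1; ext i; fin_cases i <;> simp
    rw [hρσ, diagonal_vecCons_ofReal, traceNorm_diagonal_ofReal, Fin.sum_univ_two]
    simp [abs_of_nonneg hε0]
  · rw [show diagonal ![(1 : ℂ), 0] = diagonal ![((1 : ℝ) : ℂ), ((0 : ℝ) : ℂ)] by simp,
      diagonal_vecCons_ofReal, diagonal_vecCons_ofReal, diagonal_vecCons_ofReal,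
      relEnt_diagonal_ofReal, relEnt_diagonal_ofReal, Fin.sum_univ_two, Fin.sum_univ_two, binH]
    simp only [cons_val_zero, cons_val_one, cons_val_fin_one, Real.log_one, Real.log_zero,
      one_div, Real.log_inv, hlog]
    ring

/-- tightness of the semi-continuity bound, via explicit diagonal qubit states. -/
theorem semicontinuity_tight
    (M ε : ℝ) (hM : 1 < M) (hε0 : 0 ≤ ε) (hε1 : ε ≤ 1 - 1 / M)
    (ρ σ ω : Matrix (Fin 2) (Fin 2) ℂ)
    (hρ : ρ = Matrix.diagonal ![(1 : ℂ), 0])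
    (hσ : σ = Matrix.diagonal ![((1 - ε : ℝ) : ℂ), ((ε : ℝ) : ℂ)])
    (hω : ω = Matrix.diagonal ![((1 / M : ℝ) : ℂ), ((1 - 1 / M : ℝ) : ℂ)]) :
    traceNorm (ρ - σ) / 2 = ε ∧
    ((M : ℂ) • ω - ρ).PosSemidef ∧
    (∀ m : ℝ, m < M → ¬ ((m : ℂ) • ω - ρ).PosSemidef) ∧
    relEnt ρ ω - relEnt σ ω = ε * Real.log (M - 1) + binH ε :=
  semicontinuity_tight_general M ε hM hε0 ρ σ ω hρ hσ hω

end QIT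
end
end

section
/- Let dA, dB ≥ 1 and let ρ be a bipartite state on ℂ^{dA}⊗ℂ^{dB}. Then ρ ≤ min(dA, dB) · (I_{dA} ⊗ ρ_B), i.e. the matrix min(dA, dB)·(I_{dA} ⊗ ρ_B) − ρ is positive semidefinite, where I_{dA} ⊗ ρ_B denotes the Kronecker product of the dA×dA identity matrix with the B-marginal ρ_B. Equivalently, the max-relative entropy of ρ with respect to (I_{dA}/dA) ⊗ ρ_B is at most log(dA·min(dA, dB)). -/
/-!
Write `ρ = ∑ₖ ψₖ ψₖᴴ`; both sides are linear in `ρ`, so it suffices to treat a pure state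
`ψ = vec Y`, whose Schmidt rank `rank Y` is at most `r = min dA dB`. For a test vector `vec X` and
`C = Yᴴ X` the quadratic forms of `r • (1 ⊗ₖ Y Yᴴ)` and `ψ ψᴴ` are `r · tr (Cᴴ C)` and `‖tr C‖²`,
and `‖tr C‖² ≤ rank C · tr (Cᴴ C)` is Cauchy–Schwarz against the orthogonal projection `P` onto
the range of `C`: `tr C = tr (P C)` and `tr (Pᴴ P) = tr P = rank C`.
-/

noncomputable section

namespace QIT

open Matrix
open scoped ComplexOrder

variable {n : Type*} [Fintype n] [DecidableEq n]

/-- B-marginal (partial trace over A) of a bipartite matrix. -/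
def margB {dA dB : ℕ} (ρ : Matrix (Fin dA × Fin dB) (Fin dA × Fin dB) ℂ) :
    Matrix (Fin dB) (Fin dB) ℂ :=
  Matrix.of fun j j' => ∑ i, ρ (i, j) (i, j')

end QIT

namespace Matrix

open scoped ComplexOrder Kronecker

theorem kronecker_sum {α ι l m n p : Type*} [CommSemiring α] (A : Matrix l m α) (s : Finset ι)
    (B : ι → Matrix n p α) : A ⊗ₖ ∑ i ∈ s, B i = ∑ i ∈ s, A ⊗ₖ B i :=
  map_sum (kroneckerBilinear (R := α) A) B s

variable {n 𝕜 : Type*} [Fintype n] [RCLike 𝕜]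

theorem norm_trace_conjTranspose_mul_sq_le {m : Type*} [Fintype m] (A B : Matrix m n 𝕜) :
    ‖(Aᴴ * B).trace‖ ^ 2 ≤ RCLike.re (Aᴴ * A).trace * RCLike.re (Bᴴ * B).trace := by
  have h := inner_mul_inner_self_le (𝕜 := 𝕜) (WithLp.toLp 2 (vec A) : EuclideanSpace 𝕜 _)
    (WithLp.toLp 2 (vec B))
  simp only [EuclideanSpace.inner_toLp_toLp, dotProduct_comm _ (star _),
    star_vec_dotProduct_vec] at h
  have hswap : (Bᴴ * A).trace = star (Aᴴ * B).trace := by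
    rw [← trace_conjTranspose, conjTranspose_mul, conjTranspose_conjTranspose]
  rwa [hswap, norm_star, ← sq] at h

variable [DecidableEq n]

theorem exists_isStarProjection_mul_eq_self_trace_eq_rank (C : Matrix n n 𝕜) :
    ∃ P : Matrix n n 𝕜, IsStarProjection P ∧ P * C = C ∧ P.trace = C.rank := by
  -- `P` projects onto the span of the eigenvectors of `C * Cᴴ` with nonzero eigenvalue.
  have hH := isHermitian_mul_conjTranspose_self C
  set U := hH.eigenvectorUnitary
  set e : n → 𝕜 := fun k => if hH.eigenvalues k = 0 then 0 else 1
  have he : IsStarProjection (diagonal e) := by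
    refine isStarProjection_iff'.mpr ⟨?_, ?_⟩
    · rw [diagonal_mul_diagonal]; congr 1; ext k; simp [e]
    · rw [star_eq_conjTranspose, diagonal_conjTranspose]; congr 1; ext k; simp [e]
  refine ⟨Unitary.conjStarAlgAut 𝕜 _ U (diagonal e), he.map _, ?_, ?_⟩
  · have hker : (1 - Unitary.conjStarAlgAut 𝕜 _ U (diagonal e)) * (C * Cᴴ) = 0 := by
      conv_lhs => rw [hH.spectral_theorem]
      rw [← map_one (Unitary.conjStarAlgAut 𝕜 _ U), ← map_sub, ← map_mul, sub_mul, one_mul,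
        diagonal_mul_diagonal]
      convert map_zero (Unitary.conjStarAlgAut 𝕜 (Matrix n n 𝕜) U)
      rw [sub_eq_zero]
      congr 1
      ext k
      by_cases hk : hH.eigenvalues k = 0 <;> simp [e, hk]
    rw [mul_self_mul_conjTranspose_eq_zero, sub_mul, one_mul, sub_eq_zero] at hker
    exact hker.symm
  · rw [Unitary.conjStarAlgAut_apply, trace_mul_cycle, Unitary.coe_star_mul_self, one_mul,
      trace_diagonal, ← rank_self_mul_conjTranspose, hH.rank_eq_card_non_zero_eigs,
      Fintype.card_subtype]
    simp [e, Finset.sum_ite]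

theorem norm_trace_sq_le_rank_mul (C : Matrix n n 𝕜) :
    ‖C.trace‖ ^ 2 ≤ C.rank * RCLike.re (Cᴴ * C).trace := by
  obtain ⟨P, hP, hPC, hPtr⟩ := exists_isStarProjection_mul_eq_self_trace_eq_rank C
  have hPH : Pᴴ = P := hP.isSelfAdjoint
  calc ‖C.trace‖ ^ 2 = ‖(Pᴴ * C).trace‖ ^ 2 := by rw [hPH, hPC]
    _ ≤ RCLike.re (Pᴴ * P).trace * RCLike.re (Cᴴ * C).trace :=
      norm_trace_conjTranspose_mul_sq_le P C
    _ = C.rank * RCLike.re (Cᴴ * C).trace := by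
      rw [hPH, hP.isIdempotentElem.eq, hPtr, RCLike.natCast_re]

theorem posSemidef_smul_one_kronecker_sub_vecMulVec {a b : Type*} [Fintype a] [DecidableEq a]
    [Fintype b] {r : ℕ} (Y : Matrix b a 𝕜) (hY : Y.rank ≤ r) :
    ((r : 𝕜) • ((1 : Matrix a a 𝕜) ⊗ₖ (Y * Yᴴ)) -
      vecMulVec (vec Y) (star (vec Y))).PosSemidef := by
  refine .of_dotProduct_mulVec_nonneg ?_ fun x => ?_
  · exact (((PosSemidef.one.kronecker (posSemidef_self_mul_conjTranspose Y)).smul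
      (Nat.cast_nonneg r)).isHermitian).sub (posSemidef_vecMulVec_self_star _).isHermitian
  obtain ⟨X, rfl⟩ := vec_bijective.surjective x
  set C := Yᴴ * X
  have hCr : C.rank ≤ r := (rank_mul_le_left _ _).trans (by rwa [rank_conjTranspose])
  have hkron : star (vec X) ⬝ᵥ (((1 : Matrix a a 𝕜) ⊗ₖ (Y * Yᴴ)) *ᵥ vec X) = (Cᴴ * C).trace := by
    rw [← vec_mul_eq_mulVec, star_vec_dotProduct_vec, conjTranspose_mul,
      conjTranspose_conjTranspose, Matrix.mul_assoc, Matrix.mul_assoc]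
  have hpure : star (vec X) ⬝ᵥ (vecMulVec (vec Y) (star (vec Y)) *ᵥ vec X) =
      (‖C.trace‖ ^ 2 : 𝕜) := by
    rw [vecMulVec_mulVec, dotProduct_smul, op_smul_eq_mul, star_vec_dotProduct_vec,
      star_vec_dotProduct_vec, ← RCLike.conj_mul, ← RCLike.star_def, ← trace_conjTranspose,
      conjTranspose_mul, conjTranspose_conjTranspose]
  have htrace := RCLike.nonneg_iff.mp (posSemidef_conjTranspose_mul_self C).trace_nonneg
  rw [sub_mulVec, dotProduct_sub, smul_mulVec, dotProduct_smul, hkron, hpure, sub_nonneg,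
    RCLike.le_iff_re_im]
  constructor
  · simp only [RCLike.re_ofReal_pow, smul_eq_mul, RCLike.mul_re, RCLike.natCast_re,
      RCLike.natCast_im, zero_mul, sub_zero]
    exact (norm_trace_sq_le_rank_mul C).trans
      (mul_le_mul_of_nonneg_right (Nat.cast_le.mpr hCr) htrace.1)
  · simp only [RCLike.im_ofReal_pow, smul_eq_mul, RCLike.mul_im, RCLike.natCast_re, htrace.2,
      mul_zero, RCLike.natCast_im, zero_mul, add_zero]

end Matrix

namespace QIT

open Matrix
open scoped ComplexOrder

theorem margB_sum {dA dB : ℕ} {ι : Type*} (s : Finset ι)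
    (ρ : ι → Matrix (Fin dA × Fin dB) (Fin dA × Fin dB) ℂ) :
    margB (∑ k ∈ s, ρ k) = ∑ k ∈ s, margB (ρ k) := by
  ext j j'
  simp [margB, Matrix.sum_apply, Finset.sum_comm (s := s)]

theorem margB_vecMulVec_vec {dA dB : ℕ} (Y : Matrix (Fin dB) (Fin dA) ℂ) :
    margB (vecMulVec (vec Y) (star (vec Y))) = Y * Yᴴ := by
  ext j j'
  simp [margB, vecMulVec, mul_apply]

open Kronecker in
theorem state_le_min_smul_id_kron_margB_general
    {dA dB : ℕ}
    (ρ : Matrix (Fin dA × Fin dB) (Fin dA × Fin dB) ℂ)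
    (hρ : IsState ρ) :
    ((((min dA dB : ℕ) : ℂ)) • ((1 : Matrix (Fin dA) (Fin dA) ℂ) ⊗ₖ margB ρ) - ρ).PosSemidef := by
  obtain ⟨m, ψ, rfl⟩ := posSemidef_iff_eq_sum_vecMulVec.mp hρ.1
  -- `vec` stacks columns: `vec Y (i, j) = Y j i`.
  let Y k : Matrix (Fin dB) (Fin dA) ℂ := of fun j i => ψ k (i, j)
  have hψ : ψ = fun k => vec (Y k) := rfl
  rw [hψ, margB_sum]
  simp_rw [margB_vecMulVec_vec, kronecker_sum, Finset.smul_sum, ← Finset.sum_sub_distrib]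
  exact posSemidef_sum _ fun k _ => posSemidef_smul_one_kronecker_sub_vecMulVec (Y k)
    (le_min (rank_le_width _) (rank_le_height _))

open Kronecker in
/-- ρ_{AB} ≤ min(dA,dB) · (I_A ⊗ ρ_B). -/
theorem state_le_min_smul_id_kron_margB
    {dA dB : ℕ} (hA : 1 ≤ dA) (hB : 1 ≤ dB)
    (ρ : Matrix (Fin dA × Fin dB) (Fin dA × Fin dB) ℂ)
    (hρ : IsState ρ) :
    ((((min dA dB : ℕ) : ℂ)) • ((1 : Matrix (Fin dA) (Fin dA) ℂ) ⊗ₖ margB ρ) - ρ).PosSemidef :=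
  state_le_min_smul_id_kron_margB_general ρ hρ

end QIT
end
end

section
/- For all Hermitian d×d complex matrices A and B, Tr(A + B)₊ ≤ Tr A₊ + Tr B₊, i.e. the trace of the positive part is subadditive on Hermitian matrices. -/
/-!
For Hermitian `A`, `Tr A₊` is the maximum of `Re Tr (A T)` over `0 ≤ T ≤ 1`: in the eigenbasis of
`A` the trace is `∑ λᵢ Mᵢᵢ` with `M = U⋆ T U` still between `0` and `1`, so each `Mᵢᵢ ∈ [0, 1]`,
and the maximum is attained at the spectral projection onto the nonnegative eigenvalues. Taking
`T` to be that projection for `A + B` gives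
`Tr (A + B)₊ = Re Tr (A T) + Re Tr (B T) ≤ Tr A₊ + Tr B₊`.
-/

noncomputable section

namespace Matrix

open scoped ComplexOrder MatrixOrder

variable {𝕜 n : Type*} [RCLike 𝕜] [Fintype n] [DecidableEq n]

lemma re_trace_diagonal_mul_le (μ : n → ℝ) {M : Matrix n n 𝕜} (h0 : 0 ≤ M) (h1 : M ≤ 1) :
    RCLike.re (diagonal (RCLike.ofReal ∘ μ) * M).trace ≤ ∑ i, max (μ i) 0 := by
  simp only [trace, diag, diagonal_mul, Function.comp_apply, map_sum, RCLike.re_ofReal_mul]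
  refine Finset.sum_le_sum fun i _ => ?_
  have hM0 : 0 ≤ RCLike.re (M i i) :=
    (RCLike.nonneg_iff.mp (nonneg_iff_posSemidef.mp h0).diag_nonneg).1
  have hM1 : RCLike.re (M i i) ≤ 1 := by
    simpa using (RCLike.nonneg_iff.mp (le_iff.mp h1).diag_nonneg).1
  rcases le_total 0 (μ i) with hμ | hμ
  · nlinarith [le_max_left (μ i) 0]
  · nlinarith [le_max_right (μ i) 0]

lemma IsHermitian.trace_mul_eq_trace_diagonal_mul {A : Matrix n n 𝕜} (hA : A.IsHermitian)
    (T : Matrix n n 𝕜) :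
    (A * T).trace = (diagonal (RCLike.ofReal ∘ hA.eigenvalues) *
      (star (hA.eigenvectorUnitary : Matrix n n 𝕜) * T *
        (hA.eigenvectorUnitary : Matrix n n 𝕜))).trace := by
  rw [← hA.conjStarAlgAut_star_eigenvectorUnitary,
    ← Unitary.conjStarAlgAut_star_apply (S := 𝕜) (x := T), ← map_mul,
    Unitary.conjStarAlgAut_star_apply, trace_mul_cycle,
    Unitary.mul_star_self_of_mem hA.eigenvectorUnitary.2, one_mul]

end Matrix

namespace QIT

open Matrix
open scoped ComplexOrder MatrixOrder

variable {n : Type*} [Fintype n] [DecidableEq n]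

lemma trPos_of_isHermitian {A : Matrix n n ℂ} (hA : A.IsHermitian) :
    trPos A = ∑ i, max (hA.eigenvalues i) 0 :=
  dif_pos hA

lemma re_trace_mul_le_trPos {A T : Matrix n n ℂ} (hA : A.IsHermitian) (h0 : 0 ≤ T) (h1 : T ≤ 1) :
    (A * T).trace.re ≤ trPos A := by
  set U : Matrix n n ℂ := (hA.eigenvectorUnitary : Matrix n n ℂ)
  have hUU : star U * U = 1 := Unitary.star_mul_self_of_mem hA.eigenvectorUnitary.2
  rw [trPos_of_isHermitian hA, hA.trace_mul_eq_trace_diagonal_mul]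
  refine re_trace_diagonal_mul_le _ (star_left_conjugate_nonneg h0 U) ?_
  simpa [hUU] using star_left_conjugate_le_conjugate h1 U

lemma exists_re_trace_mul_eq_trPos {A : Matrix n n ℂ} (hA : A.IsHermitian) :
    ∃ T : Matrix n n ℂ, 0 ≤ T ∧ T ≤ 1 ∧ (A * T).trace.re = trPos A := by
  set U : Matrix n n ℂ := (hA.eigenvectorUnitary : Matrix n n ℂ)
  have hUU : U * star U = 1 := Unitary.mul_star_self_of_mem hA.eigenvectorUnitary.2
  have hUU' : star U * U = 1 := Unitary.star_mul_self_of_mem hA.eigenvectorUnitary.2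
  let P : Matrix n n ℂ := diagonal fun i => if 0 ≤ hA.eigenvalues i then 1 else 0
  have hP0 : 0 ≤ P := by
    refine (posSemidef_diagonal_iff.mpr fun i => ?_).nonneg
    split_ifs <;> norm_num
  have hP1 : P ≤ 1 := by
    rw [Matrix.le_iff, ← diagonal_one, diagonal_sub]
    refine posSemidef_diagonal_iff.mpr fun i => ?_
    split_ifs <;> norm_num
  refine ⟨U * P * star U, star_right_conjugate_nonneg hP0 U, ?_, ?_⟩
  · simpa [hUU] using star_right_conjugate_le_conjugate hP1 U
  · have hconj : star U * (U * P * star U) * U = P := by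
      rw [← mul_assoc, ← mul_assoc, hUU', one_mul, mul_assoc, hUU', mul_one]
    rw [hA.trace_mul_eq_trace_diagonal_mul, hconj, trPos_of_isHermitian hA, diagonal_mul_diagonal,
      trace_diagonal, Complex.re_sum]
    refine Finset.sum_congr rfl fun i _ => ?_
    split_ifs with h <;> simp [h, le_of_not_ge]

/-- subadditivity of the trace of the positive part. -/
theorem trPos_add_le
    {d : ℕ} (A B : Matrix (Fin d) (Fin d) ℂ)
    (hA : A.IsHermitian) (hB : B.IsHermitian) :
    trPos (A + B) ≤ trPos A + trPos B := by
  obtain ⟨P, hP0, hP1, hP⟩ := exists_re_trace_mul_eq_trPos (hA.add hB)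
  calc trPos (A + B) = (A * P).trace.re + (B * P).trace.re := by
        rw [← hP, add_mul, trace_add, Complex.add_re]
    _ ≤ trPos A + trPos B :=
        add_le_add (re_trace_mul_le_trPos hA hP0 hP1) (re_trace_mul_le_trPos hB hP0 hP1)

end QIT
end
end

section
/- Let ρ, ω be states on ℂ^d, let M > 0 be real with ρ ≤ Mω, and let γ be real with 0 ≤ γ ≤ M. Then the hockey-stick divergence satisfies E_γ(ρ‖ω) = Tr(ρ − γω)₊ ≤ 1 − γ/M. In particular E_γ(ρ‖ω) = 0 for every γ ≥ M. -/
noncomputable section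

namespace QIT

open Matrix
open scoped ComplexOrder

variable {n : Type*} [Fintype n] [DecidableEq n]

/-! For Hermitian `X`, `Tr X₊ = max {Re Tr (C X) : 0 ≤ C ≤ 1}`: in an eigenbasis of `X` the
diagonal of `C` lies in `[0, 1]`, and the spectral projection onto the nonnegative eigenvalues
attains the maximum. Hence `X ↦ Tr X₊` is monotone in the Löwner order. Now
`ρ - γ ω ≤ (1 - γ / M) ρ`, the gap being `(γ / M) (M ω - ρ) ≥ 0`, and
`Tr ((1 - γ / M) ρ)₊ = 1 - γ / M`. For `γ' ≥ M`, monotonicity gives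
`Tr (ρ - γ' ω)₊ ≤ Tr (ρ - M ω)₊ ≤ 0`. -/

lemma re_trace_mul_eq_sum {C B : Matrix n n ℂ} (hB : B.IsHermitian) :
    (C * B).trace.re = ∑ i,
      ((star (hB.eigenvectorUnitary : Matrix n n ℂ) * C * hB.eigenvectorUnitary) i i).re *
        hB.eigenvalues i := by
  conv_lhs => rw [hB.spectral_theorem, Unitary.conjStarAlgAut_apply]
  rw [← mul_assoc, ← mul_assoc, trace_mul_comm, ← mul_assoc, ← mul_assoc, trace, Complex.re_sum]
  simp [mul_diagonal]

lemma re_diag_star_mul_mul_nonneg {m : Type*} [Fintype m] {C : Matrix m m ℂ} (hC : C.PosSemidef)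
    (U : Matrix m m ℂ) (i : m) :
    0 ≤ ((star U * C * U) i i).re :=
  (Complex.nonneg_iff.mp (hC.conjTranspose_mul_mul_same U).diag_nonneg).1

lemma re_trace_mul_nonneg {C B : Matrix n n ℂ} (hC : C.PosSemidef) (hB : B.PosSemidef) :
    0 ≤ (C * B).trace.re := by
  rw [re_trace_mul_eq_sum hB.1]
  exact Finset.sum_nonneg fun i _ =>
    mul_nonneg (re_diag_star_mul_mul_nonneg hC _ i) (hB.eigenvalues_nonneg i)

lemma re_trace_mul_le_trPos_s13 {C B : Matrix n n ℂ} (hC : C.PosSemidef)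
    (hC1 : (1 - C).PosSemidef) (hB : B.IsHermitian) :
    (C * B).trace.re ≤ trPos B := by
  set U : Matrix n n ℂ := ↑hB.eigenvectorUnitary
  rw [re_trace_mul_eq_sum hB, trPos, dif_pos hB]
  refine Finset.sum_le_sum fun i _ => ?_
  have h0 := re_diag_star_mul_mul_nonneg hC U i
  have h1 : ((star U * C * U) i i).re ≤ 1 := by
    have := re_diag_star_mul_mul_nonneg hC1 U i
    rwa [mul_sub, sub_mul, mul_one, Unitary.coe_star_mul_self, Matrix.sub_apply, one_apply_eq,
      Complex.sub_re, Complex.one_re, sub_nonneg] at this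
  rcases le_total 0 (hB.eigenvalues i) with h | h
  · rw [max_eq_left h]; nlinarith
  · rw [max_eq_right h]; nlinarith

def nonnegSpectralProj {A : Matrix n n ℂ} (hA : A.IsHermitian) : Matrix n n ℂ :=
  (hA.eigenvectorUnitary : Matrix n n ℂ) *
    diagonal (fun i => if 0 ≤ hA.eigenvalues i then 1 else 0) *
      star (hA.eigenvectorUnitary : Matrix n n ℂ)

lemma nonnegSpectralProj_posSemidef {A : Matrix n n ℂ} (hA : A.IsHermitian) :
    (nonnegSpectralProj hA).PosSemidef := by
  refine (posSemidef_diagonal_iff.mpr fun i => ?_).mul_mul_conjTranspose_same _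
  split_ifs <;> simp

lemma one_sub_nonnegSpectralProj_posSemidef {A : Matrix n n ℂ} (hA : A.IsHermitian) :
    (1 - nonnegSpectralProj hA).PosSemidef := by
  have h : 1 - nonnegSpectralProj hA = (hA.eigenvectorUnitary : Matrix n n ℂ) *
      diagonal (fun i => 1 - if 0 ≤ hA.eigenvalues i then 1 else 0) *
        star (hA.eigenvectorUnitary : Matrix n n ℂ) := by
    rw [← diagonal_sub, diagonal_one, mul_sub, sub_mul, mul_one,
      Unitary.mul_star_self_of_mem hA.eigenvectorUnitary.2, nonnegSpectralProj]
  rw [h]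
  refine (posSemidef_diagonal_iff.mpr fun i => ?_).mul_mul_conjTranspose_same _
  split_ifs <;> simp

lemma re_trace_nonnegSpectralProj_mul {A : Matrix n n ℂ} (hA : A.IsHermitian) :
    (nonnegSpectralProj hA * A).trace.re = trPos A := by
  rw [re_trace_mul_eq_sum hA, trPos, dif_pos hA, nonnegSpectralProj]
  simp only [← mul_assoc, Unitary.coe_star_mul_self, one_mul]
  simp only [mul_assoc, Unitary.coe_star_mul_self, mul_one]
  refine Finset.sum_congr rfl fun i _ => ?_
  by_cases h : 0 ≤ hA.eigenvalues i <;> simp [h, le_of_not_ge]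

lemma trPos_mono {A B : Matrix n n ℂ} (hA : A.IsHermitian) (hAB : (B - A).PosSemidef) :
    trPos A ≤ trPos B := by
  have hB : B.IsHermitian := by simpa using hA.add hAB.1
  have hgap := re_trace_mul_nonneg (nonnegSpectralProj_posSemidef hA) hAB
  rw [mul_sub, trace_sub, Complex.sub_re] at hgap
  calc trPos A = (nonnegSpectralProj hA * A).trace.re :=
        (re_trace_nonnegSpectralProj_mul hA).symm
    _ ≤ (nonnegSpectralProj hA * B).trace.re := by linarith
    _ ≤ trPos B := re_trace_mul_le_trPos_s13 (nonnegSpectralProj_posSemidef hA)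
        (one_sub_nonnegSpectralProj_posSemidef hA) hB

lemma trPos_nonneg (A : Matrix n n ℂ) : 0 ≤ trPos A := by
  unfold trPos
  split_ifs
  exacts [Finset.sum_nonneg fun i _ => le_max_right _ _, le_rfl]

lemma trPos_eq_re_trace {A : Matrix n n ℂ} (hA : A.PosSemidef) : trPos A = A.trace.re := by
  rw [trPos, dif_pos hA.1, hA.1.trace_eq_sum_eigenvalues, Complex.re_sum]
  exact Finset.sum_congr rfl fun i _ => by simp [hA.eigenvalues_nonneg i]

lemma trPos_sub_smul_le {ρ ω : Matrix n n ℂ} (hρ : IsState ρ) (hω : ω.IsHermitian) {M γ : ℝ}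
    (hM : 0 < M) (hop : ((M : ℂ) • ω - ρ).PosSemidef) (hγ0 : 0 ≤ γ) (hγM : γ ≤ M) :
    trPos (ρ - (γ : ℂ) • ω) ≤ 1 - γ / M := by
  set t := γ / M
  have ht0 : 0 ≤ t := div_nonneg hγ0 hM.le
  have ht1 : t ≤ 1 := (div_le_one hM).mpr hγM
  have hγ : γ = t * M := (div_mul_cancel₀ γ hM.ne').symm
  have hgap : (((1 - t : ℝ) : ℂ) • ρ - (ρ - (γ : ℂ) • ω)).PosSemidef := by
    convert hop.smul (Complex.zero_le_real.mpr ht0) using 1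
    rw [hγ]; push_cast; module
  have hherm : (ρ - (γ : ℂ) • ω).IsHermitian :=
    hρ.1.1.sub (hω.smul (Complex.conj_ofReal γ))
  calc trPos (ρ - (γ : ℂ) • ω) ≤ trPos (((1 - t : ℝ) : ℂ) • ρ) := trPos_mono hherm hgap
    _ = 1 - t := by
      rw [trPos_eq_re_trace (hρ.1.smul (Complex.zero_le_real.mpr (sub_nonneg.mpr ht1))),
        trace_smul, hρ.2]
      simp

/-- hockey-stick divergence bound under a max-relative entropy constraint. -/
theorem hockeyStick_le_of_le_smul
    {d : ℕ} (ρ ω : Matrix (Fin d) (Fin d) ℂ)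
    (hρ : IsState ρ) (hω : IsState ω)
    (M : ℝ) (hM : 0 < M) (hop : ((M : ℂ) • ω - ρ).PosSemidef)
    (γ : ℝ) (hγ0 : 0 ≤ γ) (hγM : γ ≤ M) :
    trPos (ρ - (γ : ℂ) • ω) ≤ 1 - γ / M ∧
    ∀ γ' : ℝ, M ≤ γ' → trPos (ρ - (γ' : ℂ) • ω) = 0 := by
  refine ⟨trPos_sub_smul_le hρ hω.1.1 hM hop hγ0 hγM, fun γ' hγ' => ?_⟩
  have hgap : ((ρ - (M : ℂ) • ω) - (ρ - (γ' : ℂ) • ω)).PosSemidef := by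
    convert hω.1.smul (Complex.zero_le_real.mpr (sub_nonneg.mpr hγ')) using 1
    push_cast; module
  have hmono := trPos_mono (hρ.1.1.sub (hω.1.1.smul (Complex.conj_ofReal γ'))) hgap
  have hM_bound := trPos_sub_smul_le hρ hω.1.1 hM hop hM.le le_rfl
  rw [div_self hM.ne', sub_self] at hM_bound
  exact le_antisymm (hmono.trans hM_bound) (trPos_nonneg _)

end QIT
end
end
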